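/- arXiv:2301.00922 — 8 statements merged into one kernel-verified Lean document; each statement's English description precedes it below -/
import Mathlib

section
/- Suppose ν is greedy with respect to a value function U, i.e., ν(s) = argmax_a { r(s,a) + γ E[U(f(s,a,w))] }, and ‖U − U^*‖_∞ ≤ ε, where U^* is the optimal value function. Then the value U^ν of policy ν satisfies ‖U^ν − U^*‖_∞ ≤ 2γε/(1-γ). -/
/-- Performance of a greedy policy: if `ν` is greedy with respect to a
value function `U` with `‖U − U^*‖_∞ ≤ ε`, then the value `U^ν` of the policy `ν`
satisfies `‖U^ν − U^*‖_∞ ≤ 2γε/(1-γ)`. -/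
theorem greedy_policy_error
    {S A W : Type*} [Fintype S] [Fintype A] [Nonempty A] [Fintype W]
    (p : W → ℝ) (hp : ∀ w, 0 ≤ p w) (hp1 : ∑ w, p w = 1)
    (f : S → A → W → S) (r : S → A → ℝ) (γ : ℝ)
    (hγ0 : 0 ≤ γ) (hγ1 : γ < 1)
    (Ustar : S → ℝ)
    (hfix : ∀ s, Ustar s =
      Finset.univ.sup' Finset.univ_nonempty
        (fun a => r s a + γ * ∑ w, p w * Ustar (f s a w)))
    (U : S → ℝ) (ε : ℝ) (hU : ∀ s, |U s - Ustar s| ≤ ε)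
    (ν : S → A)
    (hgreedy : ∀ s a, r s a + γ * ∑ w, p w * U (f s a w) ≤
      r s (ν s) + γ * ∑ w, p w * U (f s (ν s) w))
    (Uν : S → ℝ)
    (hUν : ∀ s, Uν s = r s (ν s) + γ * ∑ w, p w * Uν (f s (ν s) w)) :
    ∀ s, |Uν s - Ustar s| ≤ 2 * γ * ε / (1 - γ) := by
  intro s₀
  have hε : 0 ≤ ε := le_trans (abs_nonneg _) (hU s₀)
  haveI : Nonempty S := ⟨s₀⟩
  set M : ℝ := Finset.univ.sup' Finset.univ_nonempty (fun s => |Uν s - Ustar s|) with hM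
  have hMle : ∀ s, |Uν s - Ustar s| ≤ M := fun s =>
    Finset.le_sup' (fun s => |Uν s - Ustar s|) (Finset.mem_univ s)
  -- generic sum comparison
  have hsumε : ∀ (g h : S → ℝ) (c : ℝ) (a : A) (s : S), (∀ x, g x ≤ h x + c) →
      ∑ w, p w * g (f s a w) ≤ (∑ w, p w * h (f s a w)) + c := by
    intro g h c a s hle
    calc ∑ w, p w * g (f s a w) ≤ ∑ w, p w * (h (f s a w) + c) :=
          Finset.sum_le_sum fun w _ => mul_le_mul_of_nonneg_left (hle _) (hp w)
      _ = (∑ w, p w * h (f s a w)) + c := by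
          simp [mul_add, Finset.sum_add_distrib, ← Finset.sum_mul, hp1]
  have key : ∀ s, |Uν s - Ustar s| ≤ γ * M + 2 * γ * ε := by
    intro s
    have hγε : 0 ≤ γ * ε := mul_nonneg hγ0 hε
    rw [abs_le]
    constructor
    · -- Ustar s ≤ Uν s + γM + 2γε
      obtain ⟨a, -, ha⟩ := Finset.exists_mem_eq_sup' (Finset.univ_nonempty (α := A))
        (fun a => r s a + γ * ∑ w, p w * Ustar (f s a w))
      have h1 : ∑ w, p w * Ustar (f s a w) ≤ (∑ w, p w * U (f s a w)) + ε :=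
        hsumε Ustar U ε a s (fun x => by have := (abs_le.mp (hU x)).1; linarith)
      have h2 : r s a + γ * ∑ w, p w * U (f s a w) ≤
          r s (ν s) + γ * ∑ w, p w * U (f s (ν s) w) := hgreedy s a
      have h3 : ∑ w, p w * U (f s (ν s) w) ≤ (∑ w, p w * Ustar (f s (ν s) w)) + ε :=
        hsumε U Ustar ε (ν s) s (fun x => by have := (abs_le.mp (hU x)).2; linarith)
      have h4 : ∑ w, p w * Ustar (f s (ν s) w) ≤ (∑ w, p w * Uν (f s (ν s) w)) + M :=
        hsumε Ustar Uν M (ν s) s (fun x => by have := (abs_le.mp (hMle x)).1; linarith)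
      have h1' := mul_le_mul_of_nonneg_left h1 hγ0
      have h3' := mul_le_mul_of_nonneg_left h3 hγ0
      have h4' := mul_le_mul_of_nonneg_left h4 hγ0
      have hfs : Ustar s = r s a + γ * ∑ w, p w * Ustar (f s a w) := by rw [hfix s, ha]
      have hUνs := hUν s
      simp only [mul_add] at h1' h3' h4'
      linarith
    · -- Uν s ≤ Ustar s + γM + 2γε
      have h4 : ∑ w, p w * Uν (f s (ν s) w) ≤ (∑ w, p w * Ustar (f s (ν s) w)) + M :=
        hsumε Uν Ustar M (ν s) s (fun x => by have := (abs_le.mp (hMle x)).2; linarith)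
      have h4' := mul_le_mul_of_nonneg_left h4 hγ0
      have h5 : r s (ν s) + γ * ∑ w, p w * Ustar (f s (ν s) w) ≤ Ustar s := by
        rw [hfix s]
        exact Finset.le_sup' (fun a => r s a + γ * ∑ w, p w * Ustar (f s a w))
          (Finset.mem_univ (ν s))
      have hUνs := hUν s
      simp only [mul_add] at h4'
      linarith
  have hMbound : M ≤ γ * M + 2 * γ * ε :=
    Finset.sup'_le _ _ fun s _ => key s
  have hM2 : M ≤ 2 * γ * ε / (1 - γ) := by
    rw [le_div_iff₀ (by linarith : (0:ℝ) < 1 - γ)]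
    nlinarith
  exact le_trans (hMle s₀) hM2
end

section
/- If ν^k is the greedy policy with respect to U^k, the result of k iterations of value iteration starting from any U^0 with 0 ≤ U^0 ≤ r_max/(1-γ), then the regret satisfies ‖U^{ν^k} − U^*‖_∞ ≤ 2 r_max γ^{k+1}/(1-γ)^2. -/
/-- Regret of the greedy policy obtained after `k` iterations of value
iteration: if `ν^k` is greedy with respect to `U^k = F^[k] U⁰`, where the MDP has rewards
in `[0, r_max]` and `0 ≤ U⁰ ≤ r_max/(1-γ)`, then
`‖U^{ν^k} − U^*‖_∞ ≤ 2 r_max γ^{k+1}/(1-γ)²`. -/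
theorem value_iteration_greedy_regret
    {S A W : Type*} [Fintype S] [Fintype A] [Nonempty A] [Fintype W]
    (p : W → ℝ) (hp : ∀ w, 0 ≤ p w) (hp1 : ∑ w, p w = 1)
    (f : S → A → W → S) (r : S → A → ℝ) (rmax γ : ℝ)
    (hr : ∀ s a, 0 ≤ r s a ∧ r s a ≤ rmax)
    (hγ0 : 0 ≤ γ) (hγ1 : γ < 1)
    (F : (S → ℝ) → (S → ℝ))
    (hF : ∀ U s, F U s =
      Finset.univ.sup' Finset.univ_nonempty
        (fun a => r s a + γ * ∑ w, p w * U (f s a w)))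
    (Ustar : S → ℝ) (hfix : F Ustar = Ustar)
    (U0 : S → ℝ) (hU0 : ∀ s, 0 ≤ U0 s ∧ U0 s ≤ rmax / (1 - γ))
    (k : ℕ) (νk : S → A)
    (hgreedy : ∀ s a, r s a + γ * ∑ w, p w * (F^[k] U0) (f s a w) ≤
      r s (νk s) + γ * ∑ w, p w * (F^[k] U0) (f s (νk s) w))
    (Uνk : S → ℝ)
    (hUνk : ∀ s, Uνk s = r s (νk s) + γ * ∑ w, p w * Uνk (f s (νk s) w)) :
    ∀ s, |Uνk s - Ustar s| ≤ 2 * rmax * γ ^ (k + 1) / (1 - γ) ^ 2 := by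
  intro s₀
  haveI : Nonempty S := ⟨s₀⟩
  have h1γ : (0:ℝ) < 1 - γ := by linarith
  obtain ⟨a₀⟩ := (inferInstance : Nonempty A)
  have hrmax : 0 ≤ rmax := le_trans (hr s₀ a₀).1 (hr s₀ a₀).2
  set c : ℝ := rmax / (1 - γ) with hc_def
  have hc : 0 ≤ c := div_nonneg hrmax h1γ.le
  -- expectation bound
  have hexp : ∀ (U V : S → ℝ) (c : ℝ), (∀ s, |U s - V s| ≤ c) →
      ∀ s a, |∑ w, p w * U (f s a w) - ∑ w, p w * V (f s a w)| ≤ c := by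
    intro U V c h s a
    rw [← Finset.sum_sub_distrib]
    calc |∑ w, (p w * U (f s a w) - p w * V (f s a w))|
        ≤ ∑ w, |p w * U (f s a w) - p w * V (f s a w)| :=
          Finset.abs_sum_le_sum_abs _ _
      _ = ∑ w, p w * |U (f s a w) - V (f s a w)| := by
          refine Finset.sum_congr rfl fun w _ => ?_
          rw [← mul_sub, abs_mul, abs_of_nonneg (hp w)]
      _ ≤ ∑ w, p w * c := by
          refine Finset.sum_le_sum fun w _ => ?_
          exact mul_le_mul_of_nonneg_left (h _) (hp w)
      _ = c := by rw [← Finset.sum_mul, hp1, one_mul]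
  -- contraction of F
  have hFcon : ∀ (U V : S → ℝ) (c : ℝ), (∀ s, |U s - V s| ≤ c) →
      ∀ s, |F U s - F V s| ≤ γ * c := by
    intro U V c h s
    have key : ∀ (X Y : S → ℝ), (∀ s, |X s - Y s| ≤ c) → F X s - F Y s ≤ γ * c := by
      intro X Y hXY
      rw [hF X s, hF Y s, sub_le_iff_le_add]
      refine Finset.sup'_le _ _ fun a _ => ?_
      have h1 := hexp X Y c hXY s a
      have h2 : r s a + γ * ∑ w, p w * Y (f s a w) ≤
          Finset.univ.sup' Finset.univ_nonempty
            (fun a => r s a + γ * ∑ w, p w * Y (f s a w)) :=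
        Finset.le_sup' (fun a => r s a + γ * ∑ w, p w * Y (f s a w)) (Finset.mem_univ a)
      have h3 : γ * (∑ w, p w * X (f s a w) - ∑ w, p w * Y (f s a w)) ≤ γ * c := by
        apply mul_le_mul_of_nonneg_left _ hγ0
        exact le_trans (le_abs_self _) h1
      nlinarith [h2, h3]
    have h' : ∀ s, |V s - U s| ≤ c := fun s => by rw [abs_sub_comm]; exact h s
    rw [abs_sub_le_iff]
    exact ⟨key U V h, key V U h'⟩
  -- Ustar bounds
  have hUstar_ub : ∀ s, Ustar s ≤ c := by
    set M : ℝ := Finset.univ.sup' Finset.univ_nonempty Ustar with hM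
    obtain ⟨s₁, _, hs₁⟩ := Finset.exists_mem_eq_sup' (Finset.univ_nonempty) Ustar
    have hMle : M ≤ rmax + γ * M := by
      have h0 : Ustar s₁ = F Ustar s₁ := by rw [hfix]
      calc M = Ustar s₁ := hs₁
        _ = F Ustar s₁ := h0
        _ ≤ rmax + γ * M := by
          rw [hF]
          refine Finset.sup'_le _ _ fun a _ => ?_
          have hsum : ∑ w, p w * Ustar (f s₁ a w) ≤ M := by
            calc ∑ w, p w * Ustar (f s₁ a w) ≤ ∑ w, p w * M := by
                  refine Finset.sum_le_sum fun w _ => ?_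
                  exact mul_le_mul_of_nonneg_left
                    (Finset.le_sup' Ustar (Finset.mem_univ _)) (hp w)
              _ = M := by rw [← Finset.sum_mul, hp1, one_mul]
          have := (hr s₁ a).2
          nlinarith
    have hMc : M ≤ c := by
      rw [hc_def, le_div_iff₀ h1γ]; nlinarith
    intro s
    exact le_trans (Finset.le_sup' _ (Finset.mem_univ s)) hMc
  have hUstar_lb : ∀ s, 0 ≤ Ustar s := by
    set m : ℝ := Finset.univ.inf' Finset.univ_nonempty Ustar with hm
    obtain ⟨s₁, _, hs₁⟩ := Finset.exists_mem_eq_inf' (Finset.univ_nonempty) Ustar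
    have hmge : γ * m ≤ m := by
      have h0 : Ustar s₁ = F Ustar s₁ := by rw [hfix]
      have hsum : m ≤ ∑ w, p w * Ustar (f s₁ a₀ w) := by
        calc m = ∑ w, p w * m := by rw [← Finset.sum_mul, hp1, one_mul]
          _ ≤ ∑ w, p w * Ustar (f s₁ a₀ w) := by
              refine Finset.sum_le_sum fun w _ => ?_
              exact mul_le_mul_of_nonneg_left (Finset.inf'_le _ (Finset.mem_univ _)) (hp w)
      have hle : r s₁ a₀ + γ * ∑ w, p w * Ustar (f s₁ a₀ w) ≤ Ustar s₁ := by
        rw [h0, hF]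
        exact Finset.le_sup' (fun a => r s₁ a + γ * ∑ w, p w * Ustar (f s₁ a w))
          (Finset.mem_univ a₀)
      have := (hr s₁ a₀).1
      nlinarith [hs₁ ▸ hle]
    have hm0 : 0 ≤ m := by nlinarith
    intro s
    exact le_trans hm0 (Finset.inf'_le _ (Finset.mem_univ s))
  -- iteration bound
  have hiter : ∀ n s, |F^[n] U0 s - Ustar s| ≤ γ ^ n * c := by
    intro n
    induction n with
    | zero =>
        intro s
        simp only [Function.iterate_zero, id_eq, pow_zero, one_mul]
        rw [abs_sub_le_iff]
        constructor
        · have := (hU0 s).2; have := hUstar_lb s; linarith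
        · have := (hU0 s).1; have := hUstar_ub s; linarith
    | succ n ih =>
        intro s
        rw [Function.iterate_succ_apply']
        have : |F (F^[n] U0) s - F Ustar s| ≤ γ * (γ ^ n * c) := hFcon _ _ _ ih s
        rw [hfix] at this
        calc |F (F^[n] U0) s - Ustar s| ≤ γ * (γ ^ n * c) := this
          _ = γ ^ (n + 1) * c := by ring
  set Uk : S → ℝ := F^[k] U0 with hUk
  set ε : ℝ := γ ^ k * c with hε
  have hε0 : 0 ≤ ε := mul_nonneg (pow_nonneg hγ0 k) hc
  -- greedy achieves the sup
  have hFUk : ∀ s, F Uk s = r s (νk s) + γ * ∑ w, p w * Uk (f s (νk s) w) := by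
    intro s
    rw [hF]
    exact le_antisymm (Finset.sup'_le _ _ fun a _ => hgreedy s a)
      (Finset.le_sup' (fun a => r s a + γ * ∑ w, p w * Uk (f s a w))
        (Finset.mem_univ (νk s)))
  -- D bound
  set D : ℝ := Finset.univ.sup' Finset.univ_nonempty (fun s => |Uνk s - Ustar s|) with hD
  obtain ⟨s₁, _, hs₁⟩ := Finset.exists_mem_eq_sup' (Finset.univ_nonempty)
    (fun s => |Uνk s - Ustar s|)
  have hDle : ∀ s, |Uνk s - Ustar s| ≤ D := fun s =>
    Finset.le_sup' (fun s => |Uνk s - Ustar s|) (Finset.mem_univ s)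
  have hdiff : ∀ s, |Uνk s - Uk s| ≤ D + ε := by
    intro s
    calc |Uνk s - Uk s| ≤ |Uνk s - Ustar s| + |Ustar s - Uk s| := abs_sub_le _ _ _
      _ ≤ D + ε := by
          have h1 := hDle s
          have h2 := hiter k s
          rw [abs_sub_comm] at h2
          exact add_le_add h1 h2
  have hDbound : D ≤ γ * (D + ε) + γ * ε := by
    have hDeq : D = |Uνk s₁ - Ustar s₁| := hs₁
    have h1 : |γ * ∑ w, p w * Uνk (f s₁ (νk s₁) w) -
        γ * ∑ w, p w * Uk (f s₁ (νk s₁) w)| ≤ γ * (D + ε) := by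
      rw [← mul_sub, abs_mul, abs_of_nonneg hγ0]
      exact mul_le_mul_of_nonneg_left (hexp _ _ _ hdiff s₁ (νk s₁)) hγ0
    have h2 : |F Uk s₁ - Ustar s₁| ≤ γ * ε := by
      have := hFcon Uk Ustar ε (hiter k) s₁
      rwa [hfix] at this
    have key : Uνk s₁ - Ustar s₁ =
        (γ * ∑ w, p w * Uνk (f s₁ (νk s₁) w) - γ * ∑ w, p w * Uk (f s₁ (νk s₁) w))
        + (F Uk s₁ - Ustar s₁) := by
      rw [hUνk s₁, hFUk s₁]; ring
    calc D = |Uνk s₁ - Ustar s₁| := hDeq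
      _ ≤ |γ * ∑ w, p w * Uνk (f s₁ (νk s₁) w) - γ * ∑ w, p w * Uk (f s₁ (νk s₁) w)|
          + |F Uk s₁ - Ustar s₁| := by rw [key]; exact abs_add_le _ _
      _ ≤ γ * (D + ε) + γ * ε := add_le_add h1 h2
  have hDfinal : D ≤ 2 * γ * ε / (1 - γ) := by
    rw [le_div_iff₀ h1γ]; nlinarith
  have hrhs : 2 * γ * ε / (1 - γ) = 2 * rmax * γ ^ (k + 1) / (1 - γ) ^ 2 := by
    rw [hε, hc_def]
    field_simp
    ring
  exact le_trans (hDle s₀) (hrhs ▸ hDfinal)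
end

section
/- Let H̃ be the frozen-state Bellman operator (H̃J)(x,y) = max_a { r(x,y,a) + γ E[J(x, f_Y(x,y,a,w))] }. For any two value functions V, V': X×Y → ℝ and any state (x,y), |(H̃^t V)(x,y) − (H̃^t V')(x,y)| ≤ γ^t max_{y' ∈ Y_{(x,y)}^t} |V(x,y') − V'(x,y')|, where Y_{(x,y)}^t is the set of fast states reachable from (x,y) in t frozen-state transitions. -/
/-- The set of fast states reachable from `(x, y)` in `t` frozen-state transitions
(the slow state `x` stays frozen). -/
def FrozenReach {X Y A W : Type*} (fY : X → Y → A → W → Y) (x : X) :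
    ℕ → Y → Y → Prop
  | 0, y, y' => y' = y
  | t + 1, y, y' => ∃ y'', FrozenReach fY x t y y'' ∧ ∃ a w, y' = fY x y'' a w

lemma sup'_abs_sub_le_aux {α : Type*} [Fintype α] [Nonempty α] (f g : α → ℝ) (c : ℝ)
    (h : ∀ a, |f a - g a| ≤ c) :
    |Finset.univ.sup' Finset.univ_nonempty f - Finset.univ.sup' Finset.univ_nonempty g| ≤ c := by
  rw [abs_sub_le_iff]
  constructor
  · rw [sub_le_iff_le_add]
    refine Finset.sup'_le _ _ fun a _ => ?_
    have h1 := (abs_sub_le_iff.1 (h a)).1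
    have h2 : g a ≤ Finset.univ.sup' Finset.univ_nonempty g :=
      Finset.le_sup' _ (Finset.mem_univ a)
    linarith
  · rw [sub_le_iff_le_add]
    refine Finset.sup'_le _ _ fun a _ => ?_
    have h1 := (abs_sub_le_iff.1 (h a)).2
    have h2 : f a ≤ Finset.univ.sup' Finset.univ_nonempty f :=
      Finset.le_sup' _ (Finset.mem_univ a)
    linarith

lemma one_step_contraction
    {X Y A W : Type*} [Fintype A] [Nonempty A] [Fintype W]
    (p : W → ℝ) (hp : ∀ w, 0 ≤ p w) (hp1 : ∑ w, p w = 1)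
    (fY : X → Y → A → W → Y) (r : X → Y → A → ℝ) (γ : ℝ)
    (hγ0 : 0 ≤ γ)
    (Htil : (X → Y → ℝ) → (X → Y → ℝ))
    (hHtil : ∀ J x y, Htil J x y =
      Finset.univ.sup' Finset.univ_nonempty
        (fun a => r x y a + γ * ∑ w, p w * J x (fY x y a w)))
    (J J' : X → Y → ℝ) (x : X) (y : Y) (c : ℝ)
    (h : ∀ a w, |J x (fY x y a w) - J' x (fY x y a w)| ≤ c) :
    |Htil J x y - Htil J' x y| ≤ γ * c := by
  rw [hHtil, hHtil]
  apply sup'_abs_sub_le_aux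
  intro a
  have heq : (r x y a + γ * ∑ w, p w * J x (fY x y a w)) -
      (r x y a + γ * ∑ w, p w * J' x (fY x y a w))
      = γ * ∑ w, p w * (J x (fY x y a w) - J' x (fY x y a w)) := by
    simp only [Finset.mul_sum]
    rw [add_sub_add_left_eq_sub, ← Finset.sum_sub_distrib]
    exact Finset.sum_congr rfl fun w _ => by ring
  rw [heq, abs_mul, abs_of_nonneg hγ0]
  have hsum : |∑ w, p w * (J x (fY x y a w) - J' x (fY x y a w))| ≤ c := by
    calc |∑ w, p w * (J x (fY x y a w) - J' x (fY x y a w))|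
        ≤ ∑ w, |p w * (J x (fY x y a w) - J' x (fY x y a w))| :=
          Finset.abs_sum_le_sum_abs _ _
      _ ≤ ∑ w, p w * c := by
          refine Finset.sum_le_sum fun w _ => ?_
          rw [abs_mul, abs_of_nonneg (hp w)]
          exact mul_le_mul_of_nonneg_left (h a w) (hp w)
      _ = c := by rw [← Finset.sum_mul, hp1, one_mul]
  exact mul_le_mul_of_nonneg_left hsum hγ0

/-- Contraction of the iterated frozen-state Bellman operator `H̃` along
reachable fast states: `|(H̃^t V)(x,y) − (H̃^t V')(x,y)| ≤ γ^t max_{y' ∈ Y_{(x,y)}^t} |V(x,y') − V'(x,y')|`,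
phrased via an arbitrary upper bound `c` of the right-hand maximand. -/
theorem frozen_bellman_iterate_contraction
    {X Y A W : Type*} [Fintype A] [Nonempty A] [Fintype W]
    (p : W → ℝ) (hp : ∀ w, 0 ≤ p w) (hp1 : ∑ w, p w = 1)
    (fY : X → Y → A → W → Y) (r : X → Y → A → ℝ) (γ : ℝ)
    (hγ0 : 0 ≤ γ) (hγ1 : γ < 1)
    (Htil : (X → Y → ℝ) → (X → Y → ℝ))
    (hHtil : ∀ J x y, Htil J x y =
      Finset.univ.sup' Finset.univ_nonempty
        (fun a => r x y a + γ * ∑ w, p w * J x (fY x y a w)))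
    (t : ℕ) (V V' : X → Y → ℝ) (x : X) (y : Y) :
    ∀ c : ℝ, (∀ y', FrozenReach fY x t y y' → |V x y' - V' x y'| ≤ c) →
      |(Htil^[t] V) x y - (Htil^[t] V') x y| ≤ γ ^ t * c := by
  induction t generalizing y V V' with
  | zero =>
    intro c hc
    simpa using hc y rfl
  | succ t ih =>
    intro c hc
    rw [Function.iterate_succ_apply, Function.iterate_succ_apply]
    have key : |(Htil^[t] (Htil V)) x y - (Htil^[t] (Htil V')) x y| ≤ γ ^ t * (γ * c) := by
      apply ih (Htil V) (Htil V') y (γ * c)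
      intro y' hy'
      apply one_step_contraction p hp hp1 fY r γ hγ0 Htil hHtil V V' x y' c
      intro a w
      exact hc _ ⟨y', hy', a, w, rfl⟩
    calc |(Htil^[t] (Htil V)) x y - (Htil^[t] (Htil V')) x y| ≤ γ ^ t * (γ * c) := key
      _ = γ ^ (t + 1) * c := by ring
end

section
/- Let H be the true Bellman operator and H̃ the frozen-state Bellman operator of a fast-slow MDP, and let V be L_V-Lipschitz. Then |(H^t V)(x,y) − (H̃^t V)(x̃,ỹ)| ≤ ‖(x,y)−(x̃,ỹ)‖₂ · (L_r Σ_{i=0}^{t-1}(γL_f)^i + L_V (γL_f)^t) + α d_Y · (L_r Σ_{i=1}^{t-1} γ^i Σ_{j=0}^{i-1} L_f^j + L_V γ^t Σ_{j=0}^{t-1} L_f^j). -/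
/-- The Euclidean (ℓ²) norm of a pair of vectors. -/
noncomputable def pairNorm {X Y : Type*} [NormedAddCommGroup X] [NormedAddCommGroup Y]
    (a : X) (b : Y) : ℝ :=
  Real.sqrt (‖a‖ ^ 2 + ‖b‖ ^ 2)

/-- The Euclidean (ℓ²) norm of a triple of vectors (state-action pairs `((x,y),a)`). -/
noncomputable def tripleNorm {X Y Z : Type*} [NormedAddCommGroup X] [NormedAddCommGroup Y]
    [NormedAddCommGroup Z] (a : X) (b : Y) (c : Z) : ℝ :=
  Real.sqrt (‖a‖ ^ 2 + ‖b‖ ^ 2 + ‖c‖ ^ 2)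

lemma pairNorm_nonneg {X Y : Type*} [NormedAddCommGroup X] [NormedAddCommGroup Y]
    (a : X) (b : Y) : 0 ≤ pairNorm a b := Real.sqrt_nonneg _

lemma pairNorm_zero_right {X Y : Type*} [NormedAddCommGroup X] [NormedAddCommGroup Y]
    (a : X) : pairNorm a (0 : Y) = ‖a‖ := by
  simp [pairNorm, Real.sqrt_sq (norm_nonneg a)]

lemma tripleNorm_zero_right {X Y Z : Type*} [NormedAddCommGroup X] [NormedAddCommGroup Y]
    [NormedAddCommGroup Z] (a : X) (b : Y) : tripleNorm a b (0 : Z) = pairNorm a b := by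
  simp [tripleNorm, pairNorm]

lemma sup'_abs_sub {α : Type*} (A : Finset α) (hA : A.Nonempty) (f g : α → ℝ) (c : ℝ)
    (h : ∀ a ∈ A, |f a - g a| ≤ c) : |A.sup' hA f - A.sup' hA g| ≤ c := by
  rw [abs_sub_le_iff]
  constructor
  · have h1 : A.sup' hA f ≤ A.sup' hA g + c := Finset.sup'_le _ _ fun a ha => by
      have h2 := (abs_sub_le_iff.mp (h a ha)).1
      have h3 := Finset.le_sup' g ha
      linarith
    linarith
  · have h1 : A.sup' hA g ≤ A.sup' hA f + c := Finset.sup'_le _ _ fun a ha => by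
      have h2 := (abs_sub_le_iff.mp (h a ha)).2
      have h3 := Finset.le_sup' f ha
      linarith
    linarith

lemma weighted_abs_sub {W : Type*} [Fintype W] (p : W → ℝ) (hp : ∀ w, 0 ≤ p w)
    (hp1 : ∑ w, p w = 1) (u v : W → ℝ) (c : ℝ) (h : ∀ w, |u w - v w| ≤ c) :
    |∑ w, p w * u w - ∑ w, p w * v w| ≤ c := by
  rw [← Finset.sum_sub_distrib]
  calc |∑ w, (p w * u w - p w * v w)| ≤ ∑ w, |p w * u w - p w * v w| :=
        Finset.abs_sum_le_sum_abs _ _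
    _ ≤ ∑ w, p w * c := Finset.sum_le_sum fun w _ => by
        rw [← mul_sub, abs_mul, abs_of_nonneg (hp w)]
        exact mul_le_mul_of_nonneg_left (h w) (hp w)
    _ = c := by rw [← Finset.sum_mul, hp1, one_mul]

noncomputable def phi1 (γ Lf Lr LV : ℝ) (t : ℕ) : ℝ :=
  Lr * ∑ i ∈ Finset.range t, (γ * Lf) ^ i + LV * (γ * Lf) ^ t

noncomputable def phi2 (γ Lf Lr LV : ℝ) (t : ℕ) : ℝ :=
  Lr * ∑ i ∈ Finset.range t, γ ^ i * ∑ j ∈ Finset.range i, Lf ^ j +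
    LV * γ ^ t * ∑ j ∈ Finset.range t, Lf ^ j

lemma phi1_succ (γ Lf Lr LV : ℝ) (t : ℕ) :
    phi1 γ Lf Lr LV (t + 1) = Lr + γ * Lf * phi1 γ Lf Lr LV t := by
  unfold phi1
  rw [Finset.sum_range_succ' (fun i => (γ * Lf) ^ i) t]
  have h : ∑ i ∈ Finset.range t, (γ * Lf) ^ (i + 1)
      = (γ * Lf) * ∑ i ∈ Finset.range t, (γ * Lf) ^ i := by
    rw [Finset.mul_sum]
    exact Finset.sum_congr rfl fun i _ => by ring
  rw [h]
  ring

lemma phi2_succ (γ Lf Lr LV : ℝ) (t : ℕ) :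
    phi2 γ Lf Lr LV (t + 1) = γ * (phi1 γ Lf Lr LV t + phi2 γ Lf Lr LV t) := by
  unfold phi1 phi2
  rw [Finset.sum_range_succ' (fun i => γ ^ i * ∑ j ∈ Finset.range i, Lf ^ j) t]
  have key : ∑ i ∈ Finset.range t, γ ^ (i + 1) * ∑ j ∈ Finset.range (i + 1), Lf ^ j
      = γ * (∑ i ∈ Finset.range t, γ ^ i * ∑ j ∈ Finset.range i, Lf ^ j)
        + γ * ∑ i ∈ Finset.range t, (γ * Lf) ^ i := by
    rw [Finset.mul_sum, Finset.mul_sum, ← Finset.sum_add_distrib]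
    exact Finset.sum_congr rfl fun i _ => by rw [Finset.sum_range_succ, mul_pow]; ring
  rw [key, Finset.sum_range_succ (fun j => Lf ^ j) t]
  simp only [Finset.sum_range_zero, pow_zero, mul_zero, one_mul, add_zero]
  rw [mul_pow]
  ring

lemma phi1_nonneg {γ Lf Lr LV : ℝ} (hγ : 0 ≤ γ) (hLf : 0 ≤ Lf) (hLr : 0 ≤ Lr)
    (hLV : 0 ≤ LV) (t : ℕ) : 0 ≤ phi1 γ Lf Lr LV t := by
  have h : 0 ≤ γ * Lf := mul_nonneg hγ hLf
  exact add_nonneg (mul_nonneg hLr (Finset.sum_nonneg fun i _ => pow_nonneg h i))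
    (mul_nonneg hLV (pow_nonneg h t))

/-- Discrepancy between the iterated true Bellman operator `H` and the
iterated frozen-state Bellman operator `H̃` of a fast-slow MDP, for an `L_V`-Lipschitz
value function `V`:
`|(H^t V)(x,y) − (H̃^t V)(x̃,ỹ)| ≤ ‖(x,y)−(x̃,ỹ)‖₂ (L_r Σ_{i<t}(γL_f)^i + L_V(γL_f)^t)
  + α d_Y (L_r Σ_{i=1}^{t-1} γ^i Σ_{j<i} L_f^j + L_V γ^t Σ_{j<t} L_f^j)`. -/
theorem true_vs_frozen_bellman_discrepancy
    {X Y α' W : Type*} [NormedAddCommGroup X] [NormedAddCommGroup Y]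
    [NormedAddCommGroup α'] [Fintype W]
    (A : Finset α') (hA : A.Nonempty)
    (p : W → ℝ) (hp : ∀ w, 0 ≤ p w) (hp1 : ∑ w, p w = 1)
    (fX : X → Y → α' → W → X) (fY : X → Y → α' → W → Y) (r : X → Y → α' → ℝ)
    (γ Lr Lf LV dY a_ : ℝ) (hγ0 : 0 ≤ γ) (hγ1 : γ < 1)
    (hLr : 0 ≤ Lr) (hLf : 0 ≤ Lf) (hLV : 0 ≤ LV) (hdY : 0 ≤ dY)
    (hα0 : 0 ≤ a_) (hα1 : a_ ≤ 1)
    -- Lipschitz continuity of the reward in (s, a)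
    (hrLip : ∀ x y a x' y' a', |r x y a - r x' y' a'| ≤
      Lr * tripleNorm (x - x') (y - y') (a - a'))
    -- Lipschitz continuity of the transition function in (s, a), for each fixed noise w
    (hfLip : ∀ x y a x' y' a' w,
      pairNorm (fX x y a w - fX x' y' a' w) (fY x y a w - fY x' y' a' w) ≤
        Lf * tripleNorm (x - x') (y - y') (a - a'))
    -- the slow state moves by at most α d_Y per step
    (hslow : ∀ x y a w, ‖x - fX x y a w‖ ≤ a_ * dY)
    -- the true and frozen-state Bellman operators
    (H Htil : (X → Y → ℝ) → (X → Y → ℝ))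
    (hH : ∀ V x y, H V x y = A.sup' hA
      (fun a => r x y a + γ * ∑ w, p w * V (fX x y a w) (fY x y a w)))
    (hHtil : ∀ V x y, Htil V x y = A.sup' hA
      (fun a => r x y a + γ * ∑ w, p w * V x (fY x y a w)))
    -- an L_V-Lipschitz value function
    (V : X → Y → ℝ)
    (hV : ∀ x y x' y', |V x y - V x' y'| ≤ LV * pairNorm (x - x') (y - y'))
    (t : ℕ) (x x' : X) (y y' : Y) :
    |(H^[t] V) x y - (Htil^[t] V) x' y'| ≤
      pairNorm (x - x') (y - y') *
        (Lr * ∑ i ∈ Finset.range t, (γ * Lf) ^ i + LV * (γ * Lf) ^ t) +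
      a_ * dY *
        (Lr * ∑ i ∈ Finset.range t, γ ^ i * ∑ j ∈ Finset.range i, Lf ^ j +
          LV * γ ^ t * ∑ j ∈ Finset.range t, Lf ^ j) := by
  have hαd : 0 ≤ a_ * dY := mul_nonneg hα0 hdY
  have hφ1 := fun t => phi1_nonneg (γ := γ) (Lf := Lf) hγ0 hLf hLr hLV t
  have main : ∀ t : ℕ,
      (∀ (x : X) (y : Y) (x' : X) (y' : Y),
        |(H^[t] V) x y - (H^[t] V) x' y'| ≤ phi1 γ Lf Lr LV t * pairNorm (x - x') (y - y')) ∧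
      (∀ (x : X) (y : Y),
        |(H^[t] V) x y - (Htil^[t] V) x y| ≤ a_ * dY * phi2 γ Lf Lr LV t) := by
    intro t
    induction t with
    | zero =>
      constructor
      · intro x y x' y'
        simpa [phi1] using hV x y x' y'
      · intro x y
        simp [phi2]
    | succ t ih =>
      obtain ⟨ihP, ihQ⟩ := ih
      constructor
      · intro x y x' y'
        simp only [Function.iterate_succ_apply']; rw [hH, hH]
        apply sup'_abs_sub
        intro a ha
        have hr := hrLip x y a x' y' a
        rw [sub_self, tripleNorm_zero_right] at hr
        have hS : |∑ w, p w * (H^[t] V) (fX x y a w) (fY x y a w) -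
            ∑ w, p w * (H^[t] V) (fX x' y' a w) (fY x' y' a w)| ≤
            phi1 γ Lf Lr LV t * (Lf * pairNorm (x - x') (y - y')) := by
          apply weighted_abs_sub p hp hp1
          intro w
          calc |(H^[t] V) (fX x y a w) (fY x y a w) - (H^[t] V) (fX x' y' a w) (fY x' y' a w)|
              ≤ phi1 γ Lf Lr LV t *
                pairNorm (fX x y a w - fX x' y' a w) (fY x y a w - fY x' y' a w) :=
                ihP _ _ _ _
            _ ≤ phi1 γ Lf Lr LV t * (Lf * pairNorm (x - x') (y - y')) := by
                have h := hfLip x y a x' y' a w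
                rw [sub_self, tripleNorm_zero_right] at h
                exact mul_le_mul_of_nonneg_left h (hφ1 t)
        have heq : (r x y a + γ * ∑ w, p w * (H^[t] V) (fX x y a w) (fY x y a w)) -
            (r x' y' a + γ * ∑ w, p w * (H^[t] V) (fX x' y' a w) (fY x' y' a w)) =
            (r x y a - r x' y' a) +
            γ * (∑ w, p w * (H^[t] V) (fX x y a w) (fY x y a w) -
              ∑ w, p w * (H^[t] V) (fX x' y' a w) (fY x' y' a w)) := by ring
        calc |(r x y a + γ * ∑ w, p w * (H^[t] V) (fX x y a w) (fY x y a w)) -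
            (r x' y' a + γ * ∑ w, p w * (H^[t] V) (fX x' y' a w) (fY x' y' a w))|
            ≤ |r x y a - r x' y' a| +
              |γ * (∑ w, p w * (H^[t] V) (fX x y a w) (fY x y a w) -
                ∑ w, p w * (H^[t] V) (fX x' y' a w) (fY x' y' a w))| := by
              rw [heq]; exact abs_add_le _ _
          _ ≤ Lr * pairNorm (x - x') (y - y') +
              γ * (phi1 γ Lf Lr LV t * (Lf * pairNorm (x - x') (y - y'))) := by
              rw [abs_mul, abs_of_nonneg hγ0]
              exact add_le_add hr (mul_le_mul_of_nonneg_left hS hγ0)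
          _ = phi1 γ Lf Lr LV (t + 1) * pairNorm (x - x') (y - y') := by
              rw [phi1_succ]; ring
      · intro x y
        simp only [Function.iterate_succ_apply']; rw [hH, hHtil]
        apply sup'_abs_sub
        intro a ha
        have hS : |∑ w, p w * (H^[t] V) (fX x y a w) (fY x y a w) -
            ∑ w, p w * (Htil^[t] V) x (fY x y a w)| ≤
            a_ * dY * phi1 γ Lf Lr LV t + a_ * dY * phi2 γ Lf Lr LV t := by
          apply weighted_abs_sub p hp hp1
          intro w
          have h1 : |(H^[t] V) (fX x y a w) (fY x y a w) - (H^[t] V) x (fY x y a w)| ≤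
              a_ * dY * phi1 γ Lf Lr LV t := by
            have := ihP (fX x y a w) (fY x y a w) x (fY x y a w)
            rw [sub_self, pairNorm_zero_right] at this
            refine this.trans ?_
            rw [norm_sub_rev, mul_comm (a_ * dY)]
            exact mul_le_mul_of_nonneg_left (hslow x y a w) (hφ1 t)
          have h2 := ihQ x (fY x y a w)
          calc |(H^[t] V) (fX x y a w) (fY x y a w) - (Htil^[t] V) x (fY x y a w)|
              ≤ |(H^[t] V) (fX x y a w) (fY x y a w) - (H^[t] V) x (fY x y a w)| +
                |(H^[t] V) x (fY x y a w) - (Htil^[t] V) x (fY x y a w)| :=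
                abs_sub_le _ _ _
            _ ≤ a_ * dY * phi1 γ Lf Lr LV t + a_ * dY * phi2 γ Lf Lr LV t :=
                add_le_add h1 h2
        have heq : (r x y a + γ * ∑ w, p w * (H^[t] V) (fX x y a w) (fY x y a w)) -
            (r x y a + γ * ∑ w, p w * (Htil^[t] V) x (fY x y a w)) =
            γ * (∑ w, p w * (H^[t] V) (fX x y a w) (fY x y a w) -
              ∑ w, p w * (Htil^[t] V) x (fY x y a w)) := by ring
        rw [heq, abs_mul, abs_of_nonneg hγ0]
        calc γ * |∑ w, p w * (H^[t] V) (fX x y a w) (fY x y a w) -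
              ∑ w, p w * (Htil^[t] V) x (fY x y a w)|
            ≤ γ * (a_ * dY * phi1 γ Lf Lr LV t + a_ * dY * phi2 γ Lf Lr LV t) :=
              mul_le_mul_of_nonneg_left hS hγ0
          _ = a_ * dY * phi2 γ Lf Lr LV (t + 1) := by rw [phi2_succ]; ring
  calc |(H^[t] V) x y - (Htil^[t] V) x' y'|
      ≤ |(H^[t] V) x y - (H^[t] V) x' y'| + |(H^[t] V) x' y' - (Htil^[t] V) x' y'| :=
        abs_sub_le _ _ _
    _ ≤ phi1 γ Lf Lr LV t * pairNorm (x - x') (y - y') + a_ * dY * phi2 γ Lf Lr LV t :=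
        add_le_add ((main t).1 x y x' y') ((main t).2 x' y')
    _ = _ := by unfold phi1 phi2; ring
end

section
/- Let Φ ∈ ℝ^{N×M} be a feature matrix whose rows for the M pre-selected states are linearly independent, and suppose there is κ ≥ 1 such that every row φ(s) of Φ can be written as κ Σ_m θ_m(s) φ(s_m) with Σ_m |θ_m(s)| ≤ 1. Let Φ† = [L^{-1}, 0] where L is the submatrix of rows corresponding to the pre-selected states (so Φ†Φ = I). Then for any vectors J, J' ∈ ℝ^N: ‖ΦΦ†J − ΦΦ†J'‖_∞ ≤ κ ‖J − J'‖_∞. -/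
/-- Amplification bound for the feature projection `ΦΦ†`: if the rows of
`Φ` at the `M` pre-selected states form an invertible matrix `L`, every row of `Φ` is a
`κ`-scaled absolutely-convex combination of the pre-selected rows, and `Φ† = [L⁻¹, 0]`,
then `‖ΦΦ†J − ΦΦ†J'‖_∞ ≤ κ ‖J − J'‖_∞` for all `J, J' ∈ ℝ^N`. -/
theorem feature_projection_amplification
    (N M : ℕ) (hMN : M ≤ N) (κ : ℝ) (hκ : 1 ≤ κ)
    (Φ : Matrix (Fin N) (Fin M) ℝ)
    (L : Matrix (Fin M) (Fin M) ℝ)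
    (hL : ∀ m m', L m m' = Φ (Fin.castLE hMN m) m')
    (hLinv : IsUnit L)
    (hrep : ∀ s : Fin N, ∃ θ : Fin M → ℝ, (∑ m, |θ m| ≤ 1) ∧
      ∀ j, Φ s j = κ * ∑ m, θ m * Φ (Fin.castLE hMN m) j)
    (Φdag : Matrix (Fin M) (Fin N) ℝ)
    (hΦdag : ∀ m (j : Fin N), Φdag m j =
      if h : (j : ℕ) < M then L⁻¹ m ⟨(j : ℕ), h⟩ else 0) :
    ∀ J J' : Fin N → ℝ,
      ‖Φ.mulVec (Φdag.mulVec J) - Φ.mulVec (Φdag.mulVec J')‖ ≤ κ * ‖J - J'‖ := by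
  intro J J'
  set D : Fin N → ℝ := J - J' with hD
  have hκ0 : (0 : ℝ) ≤ κ := le_trans zero_le_one hκ
  -- rewrite difference as image of D
  have hdiff : Φ.mulVec (Φdag.mulVec J) - Φ.mulVec (Φdag.mulVec J')
      = Φ.mulVec (Φdag.mulVec D) := by
    rw [hD, Matrix.mulVec_sub, Matrix.mulVec_sub]
  rw [hdiff]
  -- sum over Fin N of a dite supported on first M coords
  have hsum : ∀ (g : Fin M → ℝ),
      (∑ j : Fin N, (if h : (j : ℕ) < M then g ⟨(j : ℕ), h⟩ else 0))
        = ∑ i : Fin M, g i := by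
    intro g
    rw [Fin.sum_univ_eq_sum_range (fun k =>
      if h : k < M then g ⟨k, h⟩ else 0) N]
    rw [← Finset.sum_subset (Finset.range_subset_range.mpr hMN)
        (fun x _ hx => by
          rw [Finset.mem_range, not_lt] at hx
          simp [Nat.not_lt.mpr hx])]
    rw [Finset.sum_range (fun k => if h : k < M then g ⟨k, h⟩ else 0)]
    exact Finset.sum_congr rfl (fun i _ => by simp [i.isLt])
  -- Φdag.mulVec D in terms of L⁻¹
  have hΦdagD : ∀ k, Φdag.mulVec D k = ∑ i : Fin M, L⁻¹ k i * D (Fin.castLE hMN i) := by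
    intro k
    have : ∀ j : Fin N, Φdag k j * D j
        = if h : (j : ℕ) < M then L⁻¹ k ⟨(j : ℕ), h⟩ * D (Fin.castLE hMN ⟨(j : ℕ), h⟩) else 0 := by
      intro j
      rw [hΦdag]
      split
      · congr 1
      · simp
    calc Φdag.mulVec D k = ∑ j : Fin N, Φdag k j * D j := rfl
      _ = ∑ j : Fin N, (if h : (j : ℕ) < M then
            L⁻¹ k ⟨(j : ℕ), h⟩ * D (Fin.castLE hMN ⟨(j : ℕ), h⟩) else 0) := by
          exact Finset.sum_congr rfl (fun j _ => this j)
      _ = ∑ i : Fin M, L⁻¹ k i * D (Fin.castLE hMN i) :=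
          hsum (fun i => L⁻¹ k i * D (Fin.castLE hMN i))
  -- L * (Φdag.mulVec D) = D restricted to pre-selected states
  have hdetL : IsUnit L.det := (Matrix.isUnit_iff_isUnit_det L).mp hLinv
  have hLL : L * L⁻¹ = 1 := Matrix.mul_nonsing_inv L hdetL
  have hLmul : ∀ m, L.mulVec (Φdag.mulVec D) m = D (Fin.castLE hMN m) := by
    intro m
    have : Φdag.mulVec D = L⁻¹.mulVec (fun i => D (Fin.castLE hMN i)) := by
      funext k
      rw [hΦdagD k]
      rfl
    rw [this, Matrix.mulVec_mulVec, hLL, Matrix.one_mulVec]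
  -- coordinatewise bound
  have hDle : ∀ i : Fin N, |D i| ≤ ‖D‖ := by
    intro i
    simpa [Real.norm_eq_abs] using norm_le_pi_norm D i
  refine (pi_norm_le_iff_of_nonneg (by positivity)).mpr ?_
  intro s
  obtain ⟨θ, hθ1, hθ2⟩ := hrep s
  have hval : Φ.mulVec (Φdag.mulVec D) s = κ * ∑ m, θ m * D (Fin.castLE hMN m) := by
    calc Φ.mulVec (Φdag.mulVec D) s
        = ∑ j : Fin M, Φ s j * Φdag.mulVec D j := rfl
      _ = ∑ j : Fin M, (κ * ∑ m, θ m * L m j) * Φdag.mulVec D j := by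
          refine Finset.sum_congr rfl (fun j _ => ?_)
          rw [hθ2 j]
          simp only [hL]
      _ = κ * ∑ m, θ m * ∑ j : Fin M, L m j * Φdag.mulVec D j := by
          simp only [Finset.mul_sum, Finset.sum_mul]
          rw [Finset.sum_comm]
          exact Finset.sum_congr rfl (fun m _ => Finset.sum_congr rfl (fun j _ => by ring))
      _ = κ * ∑ m, θ m * D (Fin.castLE hMN m) := by
          congr 1
          exact Finset.sum_congr rfl (fun m _ => by rw [show (∑ j : Fin M, L m j * Φdag.mulVec D j) = L.mulVec (Φdag.mulVec D) m from rfl, hLmul m])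
  rw [hval, Real.norm_eq_abs, abs_mul, abs_of_nonneg hκ0]
  refine mul_le_mul_of_nonneg_left ?_ hκ0
  calc |∑ m, θ m * D (Fin.castLE hMN m)| ≤ ∑ m, |θ m * D (Fin.castLE hMN m)| :=
        Finset.abs_sum_le_sum_abs _ _
    _ ≤ ∑ m : Fin M, |θ m| * ‖D‖ := by
        refine Finset.sum_le_sum (fun m _ => ?_)
        rw [abs_mul]
        exact mul_le_mul_of_nonneg_left (hDle _) (abs_nonneg _)
    _ = (∑ m, |θ m|) * ‖D‖ := (Finset.sum_mul _ _ _).symm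
    _ ≤ 1 * ‖D‖ := mul_le_mul_of_nonneg_right hθ1 (norm_nonneg _)
    _ = ‖D‖ := one_mul _
end

section
/- Under the feature-representation assumption with amplification factor κ = γ'/γ (where γ ≤ γ' < 1), the projected upper-level Bellman operator F'_ω = Φ† ∘ F_ω ∘ Φ is a (κγ^T)-contraction with respect to the norm ‖β‖_Φ := ‖Φβ‖_∞ on ℝ^M: ‖F'_ω(β) − F'_ω(β')‖_Φ ≤ κγ^T ‖β − β'‖_Φ. Consequently F'_ω has a unique fixed point. -/
/-!
`ΦΦ†` is `κ`-Lipschitz and `F` is `γ^T`-Lipschitz, so `H = ΦΦ† ∘ F` is a `κγ^T`-contraction of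
`ℝ^N`; evaluated at `J = Φβ` this is the contraction estimate in `‖·‖_Φ`. Writing
`F' = (Φ† ∘ F) ∘ Φ` and `H = Φ ∘ (Φ† ∘ F)`, the maps `Φ` and `Φ† ∘ F` exchange the fixed points
of `F'` and `H`, so the unique fixed point of `H` given by Banach's theorem yields one for `F'`.
-/

open Function

theorem Function.existsUnique_isFixedPt_comp_swap {α β : Type*} (f : α → β) (g : β → α)
    (h : ∃! x, IsFixedPt (f ∘ g) x) : ∃! y, IsFixedPt (g ∘ f) y := by
  obtain ⟨x, hx, hx_unique⟩ := h
  refine ⟨g x, congrArg g hx, fun y hy => ?_⟩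
  have hfy : f y = x := hx_unique (f y) (congrArg f hy)
  calc y = g (f y) := hy.symm
    _ = g x := by rw [hfy]

theorem ContractingWith.existsUnique_isFixedPt {α : Type*} [MetricSpace α] [Nonempty α]
    [CompleteSpace α] {K : NNReal} {f : α → α} (hf : ContractingWith K f) :
    ∃! x, IsFixedPt f x :=
  ⟨fixedPoint f hf, hf.fixedPoint_isFixedPt, fun _ hy => hf.fixedPoint_unique hy⟩

theorem projected_bellman_contraction_general
    (N M T : ℕ) (κ γ : ℝ) (hκ : 1 ≤ κ)
    (hγ0 : 0 ≤ γ) (hκγ : κ * γ ^ T < 1)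
    (Φ : Matrix (Fin N) (Fin M) ℝ) (Φdag : Matrix (Fin M) (Fin N) ℝ)
    (hamp : ∀ J J' : Fin N → ℝ,
      ‖Φ.mulVec (Φdag.mulVec J) - Φ.mulVec (Φdag.mulVec J')‖ ≤ κ * ‖J - J'‖)
    (F : (Fin N → ℝ) → (Fin N → ℝ))
    (hF : ∀ V V' : Fin N → ℝ, ‖F V - F V'‖ ≤ γ ^ T * ‖V - V'‖) :
    (∀ β β' : Fin M → ℝ,
      ‖Φ.mulVec (Φdag.mulVec (F (Φ.mulVec β))) -
          Φ.mulVec (Φdag.mulVec (F (Φ.mulVec β')))‖ ≤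
        κ * γ ^ T * ‖Φ.mulVec β - Φ.mulVec β'‖) ∧
      ∃! β : Fin M → ℝ, Φdag.mulVec (F (Φ.mulVec β)) = β := by
  have hproj : LipschitzWith ⟨κ, by linarith⟩ fun J => Φ.mulVec (Φdag.mulVec J) :=
    lipschitzWith_iff_norm_sub_le.2 hamp
  have hF_lip : LipschitzWith ⟨γ ^ T, by positivity⟩ F := lipschitzWith_iff_norm_sub_le.2 hF
  have hH : ContractingWith ⟨κ * γ ^ T, by positivity⟩
      (Φ.mulVec ∘ fun J => Φdag.mulVec (F J)) :=
    ⟨by exact_mod_cast hκγ, hproj.comp hF_lip⟩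
  exact ⟨fun β β' => hH.2.norm_sub_le (Φ.mulVec β) (Φ.mulVec β'),
    existsUnique_isFixedPt_comp_swap _ _ hH.existsUnique_isFixedPt⟩

/-- The projected upper-level Bellman operator `F'_ω = Φ† ∘ F_ω ∘ Φ` is a
`(κγ^T)`-contraction in the norm `‖β‖_Φ = ‖Φβ‖_∞`, and consequently has a unique fixed
point. Here `F_ω` is a `γ^T`-contraction in the sup norm, `Φ†Φ = I`, and `ΦΦ†` has
amplification factor `κ`. -/
theorem projected_bellman_contraction
    (N M T : ℕ) (hT : 1 ≤ T) (κ γ : ℝ) (hκ : 1 ≤ κ)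
    (hγ0 : 0 ≤ γ) (hγ1 : γ < 1) (hκγ : κ * γ ^ T < 1)
    (Φ : Matrix (Fin N) (Fin M) ℝ) (Φdag : Matrix (Fin M) (Fin N) ℝ)
    (hinv : Φdag * Φ = 1)
    (hamp : ∀ J J' : Fin N → ℝ,
      ‖Φ.mulVec (Φdag.mulVec J) - Φ.mulVec (Φdag.mulVec J')‖ ≤ κ * ‖J - J'‖)
    (F : (Fin N → ℝ) → (Fin N → ℝ))
    (hF : ∀ V V' : Fin N → ℝ, ‖F V - F V'‖ ≤ γ ^ T * ‖V - V'‖) :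
    (∀ β β' : Fin M → ℝ,
      ‖Φ.mulVec (Φdag.mulVec (F (Φ.mulVec β))) -
          Φ.mulVec (Φdag.mulVec (F (Φ.mulVec β')))‖ ≤
        κ * γ ^ T * ‖Φ.mulVec β - Φ.mulVec β'‖) ∧
      ∃! β : Fin M → ℝ, Φdag.mulVec (F (Φ.mulVec β)) = β :=
  projected_bellman_contraction_general N M T κ γ hκ hγ0 hκγ Φ Φdag hamp F hF
end

section
/- Suppose the sequence (ω_1^*,…,ω_T^*) satisfies the projected Bellman recursion ω_t^* = Φ†H̄(Φω_{t+1}^*) with ω_T^* = 0, and the best linear approximation error is ε_low = max_t inf_ω ‖J_t^* − Φω‖_∞, where J_t^* is the exact finite-horizon value (J_T^* = 0, J_t^* = H̄J_{t+1}^*). With amplification κ and γ' = κγ < 1, the approximation error satisfies ‖J_t^* − Φω_t^*‖_∞ ≤ (1 + (γ+1)/γ · Σ_{i=1}^{T-t}(κγ)^i) ε_low. -/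
/-- Error of the lower-level approximate value iteration: if
`ω_t^* = Φ† H̄ (Φ ω_{t+1}^*)` with `ω_T^* = 0`, `J_t^*` is the exact finite-horizon value
(`J_T^* = 0`, `J_t^* = H̄ J_{t+1}^*`), and `ε_low` upper bounds the best linear
approximation error of each `J_t^*`, then for all `1 ≤ t ≤ T`,
`‖J_t^* − Φω_t^*‖_∞ ≤ (1 + (γ+1)/γ Σ_{i=1}^{T-t}(κγ)^i) ε_low`. -/
theorem lower_level_avi_error
    (N M T : ℕ) (hT : 1 ≤ T) (κ γ εlow : ℝ) (hκ : 1 ≤ κ)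
    (hγ0 : 0 < γ) (hγ1 : γ < 1) (hκγ : κ * γ < 1) (hεlow : 0 ≤ εlow)
    (Φ : Matrix (Fin N) (Fin M) ℝ) (Φdag : Matrix (Fin M) (Fin N) ℝ)
    (hinv : Φdag * Φ = 1)
    (hamp : ∀ J J' : Fin N → ℝ,
      ‖Φ.mulVec (Φdag.mulVec J) - Φ.mulVec (Φdag.mulVec J')‖ ≤ κ * ‖J - J'‖)
    (Hbar : (Fin N → ℝ) → (Fin N → ℝ))
    (hHbar : ∀ J J' : Fin N → ℝ, ‖Hbar J - Hbar J'‖ ≤ γ * ‖J - J'‖)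
    -- exact finite-horizon values
    (Jstar : ℕ → (Fin N → ℝ))
    (hJT : Jstar T = 0)
    (hJrec : ∀ t, t < T → Jstar t = Hbar (Jstar (t + 1)))
    -- the best linear approximation error
    (hεapprox : ∀ t ≤ T, ∀ δ > 0, ∃ ω : Fin M → ℝ,
      ‖Jstar t - Φ.mulVec ω‖ ≤ εlow + δ)
    -- projected value iteration
    (ωstar : ℕ → (Fin M → ℝ))
    (hωT : ωstar T = 0)
    (hωrec : ∀ t, t < T → ωstar t = Φdag.mulVec (Hbar (Φ.mulVec (ωstar (t + 1))))) :
    ∀ t, 1 ≤ t → t ≤ T →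
      ‖Jstar t - Φ.mulVec (ωstar t)‖ ≤
        (1 + (γ + 1) / γ * ∑ i ∈ Finset.Icc 1 (T - t), (κ * γ) ^ i) * εlow := by

  have hκ0 : (0:ℝ) < 1 + κ := by linarith
  have hproj : ∀ t ≤ T, ‖Jstar t - Φ.mulVec (Φdag.mulVec (Jstar t))‖ ≤ (1 + κ) * εlow := by
    intro t ht
    refine le_of_forall_pos_le_add fun ε hε => ?_
    obtain ⟨ω, hω⟩ := hεapprox t ht (ε / (1 + κ)) (by positivity)
    have hP : Φ.mulVec (Φdag.mulVec (Φ.mulVec ω)) = Φ.mulVec ω := by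
      rw [Matrix.mulVec_mulVec, Matrix.mulVec_mulVec, Matrix.mul_assoc, hinv,
        Matrix.mul_one]
    have hsplit : Jstar t - Φ.mulVec (Φdag.mulVec (Jstar t)) =
        (Jstar t - Φ.mulVec ω) +
        (Φ.mulVec (Φdag.mulVec (Φ.mulVec ω)) - Φ.mulVec (Φdag.mulVec (Jstar t))) := by
      rw [hP]; abel
    calc ‖Jstar t - Φ.mulVec (Φdag.mulVec (Jstar t))‖
        ≤ ‖Jstar t - Φ.mulVec ω‖ +
          ‖Φ.mulVec (Φdag.mulVec (Φ.mulVec ω)) - Φ.mulVec (Φdag.mulVec (Jstar t))‖ := by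
          rw [hsplit]; exact norm_add_le _ _
      _ ≤ (εlow + ε / (1 + κ)) + κ * ‖Φ.mulVec ω - Jstar t‖ :=
          add_le_add hω (hamp _ _)
      _ = (εlow + ε / (1 + κ)) + κ * ‖Jstar t - Φ.mulVec ω‖ := by rw [norm_sub_rev]
      _ ≤ (εlow + ε / (1 + κ)) + κ * (εlow + ε / (1 + κ)) :=
          add_le_add le_rfl (mul_le_mul_of_nonneg_left hω (by linarith))
      _ = (1 + κ) * εlow + (1 + κ) * (ε / (1 + κ)) := by ring
      _ = (1 + κ) * εlow + ε := by rw [mul_div_cancel₀ _ (ne_of_gt hκ0)]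
  have hκγ0 : (0:ℝ) ≤ κ * γ := by positivity
  have key : ∀ n ≤ T, ‖Jstar (T - n) - Φ.mulVec (ωstar (T - n))‖ ≤
      (1 + κ) * (∑ i ∈ Finset.range n, (κ * γ) ^ i) * εlow := by
    intro n
    induction n with
    | zero =>
      intro _
      simp [hJT, hωT, Matrix.mulVec_zero]
    | succ n ih =>
      intro hn
      have hn' : n ≤ T := by omega
      have ht : T - (n + 1) < T := by omega
      have hts : T - (n + 1) + 1 = T - n := by omega
      set t := T - (n + 1) with htdef
      have hJ : Jstar t = Hbar (Jstar (t + 1)) := hJrec t ht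
      have hω : ωstar t = Φdag.mulVec (Hbar (Φ.mulVec (ωstar (t + 1)))) := hωrec t ht
      have ihe : ‖Jstar (t + 1) - Φ.mulVec (ωstar (t + 1))‖ ≤
          (1 + κ) * (∑ i ∈ Finset.range n, (κ * γ) ^ i) * εlow := by
        rw [hts]; exact ih hn'
      have e2 : ‖Φ.mulVec (Φdag.mulVec (Jstar t)) - Φ.mulVec (ωstar t)‖ ≤
          κ * (γ * ‖Jstar (t + 1) - Φ.mulVec (ωstar (t + 1))‖) := by
        rw [hω]
        calc ‖Φ.mulVec (Φdag.mulVec (Jstar t)) -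
              Φ.mulVec (Φdag.mulVec (Hbar (Φ.mulVec (ωstar (t + 1)))))‖
            ≤ κ * ‖Jstar t - Hbar (Φ.mulVec (ωstar (t + 1)))‖ := hamp _ _
          _ = κ * ‖Hbar (Jstar (t + 1)) - Hbar (Φ.mulVec (ωstar (t + 1)))‖ := by rw [hJ]
          _ ≤ κ * (γ * ‖Jstar (t + 1) - Φ.mulVec (ωstar (t + 1))‖) :=
              mul_le_mul_of_nonneg_left (hHbar _ _) (by linarith)
      have e1 : ‖Jstar t - Φ.mulVec (ωstar t)‖ ≤
          ‖Jstar t - Φ.mulVec (Φdag.mulVec (Jstar t))‖ +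
          ‖Φ.mulVec (Φdag.mulVec (Jstar t)) - Φ.mulVec (ωstar t)‖ := by
        have h : Jstar t - Φ.mulVec (ωstar t) =
            (Jstar t - Φ.mulVec (Φdag.mulVec (Jstar t))) +
            (Φ.mulVec (Φdag.mulVec (Jstar t)) - Φ.mulVec (ωstar t)) := by abel
        rw [h]; exact norm_add_le _ _
      have hS : ∑ i ∈ Finset.range (n + 1), (κ * γ) ^ i =
          (κ * γ) * ∑ i ∈ Finset.range n, (κ * γ) ^ i + 1 := geom_sum_succ
      calc ‖Jstar t - Φ.mulVec (ωstar t)‖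
          ≤ ‖Jstar t - Φ.mulVec (Φdag.mulVec (Jstar t))‖ +
            ‖Φ.mulVec (Φdag.mulVec (Jstar t)) - Φ.mulVec (ωstar t)‖ := e1
        _ ≤ (1 + κ) * εlow +
            κ * (γ * ((1 + κ) * (∑ i ∈ Finset.range n, (κ * γ) ^ i) * εlow)) := by
            have h1 := hproj t (le_of_lt ht)
            have h2 : κ * (γ * ‖Jstar (t + 1) - Φ.mulVec (ωstar (t + 1))‖) ≤
                κ * (γ * ((1 + κ) * (∑ i ∈ Finset.range n, (κ * γ) ^ i) * εlow)) :=
              mul_le_mul_of_nonneg_left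
                (mul_le_mul_of_nonneg_left ihe hγ0.le) (by linarith)
            linarith [e2]
        _ = (1 + κ) * (∑ i ∈ Finset.range (n + 1), (κ * γ) ^ i) * εlow := by
            rw [hS]; ring
  intro t h1 hT'
  have hkey := key (T - t) (by omega)
  rw [show T - (T - t) = t from by omega] at hkey
  refine hkey.trans ?_
  apply mul_le_mul_of_nonneg_right _ hεlow
  set S := ∑ i ∈ Finset.range (T - t), (κ * γ) ^ i with hSdef
  have hIcc : ∑ i ∈ Finset.Icc 1 (T - t), (κ * γ) ^ i = κ * γ * S := by
    rw [← Finset.Ico_add_one_right_eq_Icc, Finset.sum_Ico_eq_sum_range]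
    simp only [Nat.succ_sub_one, hSdef, Finset.mul_sum]
    refine Finset.sum_congr rfl fun i _ => ?_
    rw [pow_add, pow_one]
  have hSnn : 0 ≤ S := by positivity
  have hgm : S * (κ * γ - 1) = (κ * γ) ^ (T - t) - 1 := geom_sum_mul _ _
  have hpow : 0 ≤ (κ * γ) ^ (T - t) := by positivity
  have hSle : S * (1 - κ * γ) ≤ 1 := by nlinarith
  rw [hIcc]
  have hfrac : (γ + 1) / γ * (κ * γ * S) = (γ + 1) * (κ * S) := by
    field_simp
  rw [hfrac]
  nlinarith [hSle]
end

section
/- Let F_ω be a γ^T-contraction Bellman operator with fixed point V*_ω, let β* be the fixed point of the projected operator F'_ω = Φ† ∘ F_ω ∘ Φ (which exists since κγ^T < 1), and let ε_up = inf_β ‖V*_ω − Φβ‖_∞. Then ‖V*_ω − Φβ*‖_∞ ≤ (1+κ)/(1 − κγ^T) · ε_up. -/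
/-- Fixed-point error of the projected upper-level operator: if `F_ω` is
a `γ^T`-contraction with fixed point `V*_ω`, `β*` is a fixed point of
`F'_ω = Φ† ∘ F_ω ∘ Φ`, and `ε_up` bounds the best linear approximation error of `V*_ω`,
then `‖V*_ω − Φβ*‖_∞ ≤ (1+κ)/(1 − κγ^T) ε_up`. -/
theorem upper_level_fixed_point_error
    (N M T : ℕ) (hT : 1 ≤ T) (κ γ εup : ℝ) (hκ : 1 ≤ κ)
    (hγ0 : 0 ≤ γ) (hγ1 : γ < 1) (hκγ : κ * γ ^ T < 1) (hεup : 0 ≤ εup)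
    (Φ : Matrix (Fin N) (Fin M) ℝ) (Φdag : Matrix (Fin M) (Fin N) ℝ)
    (hinv : Φdag * Φ = 1)
    (hamp : ∀ J J' : Fin N → ℝ,
      ‖Φ.mulVec (Φdag.mulVec J) - Φ.mulVec (Φdag.mulVec J')‖ ≤ κ * ‖J - J'‖)
    (F : (Fin N → ℝ) → (Fin N → ℝ))
    (hF : ∀ V V' : Fin N → ℝ, ‖F V - F V'‖ ≤ γ ^ T * ‖V - V'‖)
    (Vstar : Fin N → ℝ) (hVfix : F Vstar = Vstar)
    (hεapprox : ∀ δ > 0, ∃ β : Fin M → ℝ, ‖Vstar - Φ.mulVec β‖ ≤ εup + δ)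
    (βstar : Fin M → ℝ) (hβfix : Φdag.mulVec (F (Φ.mulVec βstar)) = βstar) :
    ‖Vstar - Φ.mulVec βstar‖ ≤ (1 + κ) / (1 - κ * γ ^ T) * εup := by

  have hc : 0 < 1 - κ * γ ^ T := by linarith
  have hC : 0 < (1 + κ) / (1 - κ * γ ^ T) := by positivity
  set C := (1 + κ) / (1 - κ * γ ^ T) with hCdef
  have hproj : ∀ β : Fin M → ℝ, Φdag.mulVec (Φ.mulVec β) = β := by
    intro β
    rw [Matrix.mulVec_mulVec, hinv, Matrix.one_mulVec]
  refine le_of_forall_pos_le_add ?_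
  intro ε hε
  set δ := ε / C with hδdef
  have hδpos : 0 < δ := by positivity
  have hCδ : C * δ = ε := mul_div_cancel₀ ε (ne_of_gt hC)
  obtain ⟨β, hβ⟩ := hεapprox δ hδpos
  set D := ‖Vstar - Φ.mulVec βstar‖ with hD
  have hDnn : 0 ≤ D := norm_nonneg _
  have h2 : ‖Φ.mulVec β - Φ.mulVec βstar‖ ≤ κ * ‖Φ.mulVec β - F (Φ.mulVec βstar)‖ := by
    have := hamp (Φ.mulVec β) (F (Φ.mulVec βstar))
    rwa [hproj, hβfix] at this
  have h3 : ‖Φ.mulVec β - F (Φ.mulVec βstar)‖ ≤ (εup + δ) + γ ^ T * D := by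
    calc ‖Φ.mulVec β - F (Φ.mulVec βstar)‖
        ≤ ‖Φ.mulVec β - Vstar‖ + ‖Vstar - F (Φ.mulVec βstar)‖ :=
          norm_sub_le_norm_sub_add_norm_sub _ _ _
      _ = ‖Vstar - Φ.mulVec β‖ + ‖F Vstar - F (Φ.mulVec βstar)‖ := by
          rw [norm_sub_rev, hVfix]
      _ ≤ (εup + δ) + γ ^ T * D := by
          exact add_le_add hβ (hF _ _)
  have h4 : D ≤ ‖Vstar - Φ.mulVec β‖ + ‖Φ.mulVec β - Φ.mulVec βstar‖ :=
    norm_sub_le_norm_sub_add_norm_sub _ _ _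
  have h5 : D ≤ (1 + κ) * (εup + δ) + κ * γ ^ T * D := by
    have hκ0 : (0:ℝ) < κ := by linarith
    nlinarith [mul_le_mul_of_nonneg_left h3 (le_of_lt hκ0)]
  have h6 : D * (1 - κ * γ ^ T) ≤ (1 + κ) * (εup + δ) := by nlinarith
  have h7 : D ≤ C * (εup + δ) := by
    rw [hCdef, div_mul_eq_mul_div, le_div_iff₀ hc]
    linarith
  calc D ≤ C * (εup + δ) := h7
    _ = C * εup + C * δ := by ring
    _ = C * εup + ε := by rw [hCδ]
end
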